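/- arXiv:2408.06160 — 3 statements merged into one kernel-verified Lean document; each statement's English description precedes it below -/
import Mathlib

section
/- Let n ≥ 1 and let P₁, …, P_m be Pauli words on n qubits, each of the stabilizer-rotation form P(A_k, j_k) (Pauli Z on every qubit in a finite set A_k ⊆ {1,…,n}, Pauli Y on a single qubit j_k ∉ A_k, identity elsewhere; A_k may be empty). Let U = ∏_{k=1}^{m} exp(i(π/2)P_k), the product of the matrix exponentials in a fixed order. Then there exist a permutation σ of the set of bit strings {0,1}^n and complex numbers φ_b with |φ_b| = 1 such that for every bit string b, U e_b = φ_b · e_{σ(b)}, where e_b denotes the computational basis vector indexed by b. In other words, U maps computational basis states bijectively to computational basis states, changing amplitudes by at most a phase. -/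
open Matrix Complex Real

/-- The single-qubit identity matrix. -/
noncomputable def PauliI : Matrix (Fin 2) (Fin 2) ℂ := !![1, 0; 0, 1]

/-- The single-qubit Pauli X matrix. -/
noncomputable def PauliX : Matrix (Fin 2) (Fin 2) ℂ := !![0, 1; 1, 0]

/-- The single-qubit Pauli Y matrix. -/
noncomputable def PauliY : Matrix (Fin 2) (Fin 2) ℂ := !![0, -Complex.I; Complex.I, 0]

/-- The single-qubit Pauli Z matrix. -/
noncomputable def PauliZ : Matrix (Fin 2) (Fin 2) ℂ := !![1, 0; 0, -1]

/-- The Pauli word `W(p)`: the `n`-fold Kronecker/tensor product of the single-qubit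
matrices `p i`, i.e. the `2^n × 2^n` matrix with entries `W(p)(a,b) = ∏ i, p i (a i) (b i)`. -/
noncomputable def PauliWord (n : ℕ) (p : Fin n → Matrix (Fin 2) (Fin 2) ℂ) :
    Matrix (Fin n → Fin 2) (Fin n → Fin 2) ℂ :=
  Matrix.of fun a b => ∏ i, p i (a i) (b i)

/-- The stabilizer-rotation Pauli word `P(A, j)`: Pauli Z on every qubit of `A`,
Pauli Y on qubit `j`, and identity elsewhere. -/
noncomputable def stabRot (n : ℕ) (A : Finset (Fin n)) (j : Fin n) :
    Matrix (Fin n → Fin 2) (Fin n → Fin 2) ℂ :=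
  PauliWord n fun i => if i = j then PauliY else if i ∈ A then PauliZ else PauliI

/-- The computational basis vector `e_b` indexed by the bit string `b`. -/
noncomputable def basisVec (n : ℕ) (b : Fin n → Fin 2) : (Fin n → Fin 2) → ℂ :=
  fun a => if a = b then 1 else 0

/-!
A stabilizer-rotation word `P = P(A, j)` squares to the identity, so
`exp(iθP) = cos θ + i sin θ P`, which at `θ = π/2` is `iP`. Each single-qubit factor `Y`, `Z`, `I`
sends every basis vector to a unimodular multiple of a basis vector, hence so does their tensor
product `P` (it flips bit `j` and multiplies by a phase), and hence so does `iP`. Matrices with this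
property form a monoid, which therefore contains the product of the rotations.
-/

theorem exp_smul_of_mul_self_eq_one {𝔸 : Type*} [Ring 𝔸] [Algebra ℂ 𝔸] [TopologicalSpace 𝔸]
    [IsTopologicalRing 𝔸] [ContinuousSMul ℂ 𝔸] [T2Space 𝔸] {a : 𝔸} (ha : a * a = 1) (c : ℂ) :
    NormedSpace.exp (c • a) = Complex.cosh c • (1 : 𝔸) + Complex.sinh c • a := by
  have hterm : ∀ k : ℕ, ((k.factorial : ℂ))⁻¹ • (c • a) ^ k = (c ^ k / k.factorial) • a ^ k := by
    intro k; rw [smul_pow, smul_smul, div_eq_mul_inv, mul_comm]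
  have heven : ∀ k : ℕ, a ^ (2 * k) = 1 := fun k => by rw [pow_mul, sq, ha, one_pow]
  rw [NormedSpace.exp_eq_tsum ℂ]
  refine HasSum.tsum_eq (HasSum.even_add_odd ?_ ?_)
  · convert (Complex.hasSum_cosh c).smul_const (1 : 𝔸) using 2 with k
    rw [hterm, heven]
  · convert (Complex.hasSum_sinh c).smul_const a using 2 with k
    rw [hterm, pow_succ a, heven, one_mul]

theorem exp_pi_div_two_mul_I_smul_of_mul_self_eq_one {𝔸 : Type*} [Ring 𝔸] [Algebra ℂ 𝔸]
    [TopologicalSpace 𝔸] [IsTopologicalRing 𝔸] [ContinuousSMul ℂ 𝔸] [T2Space 𝔸] {a : 𝔸}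
    (ha : a * a = 1) :
    NormedSpace.exp (((π / 2 : ℂ) * I) • a) = I • a := by
  have hcast : (π / 2 : ℂ) = ((π / 2 : ℝ) : ℂ) := by push_cast; rfl
  rw [exp_smul_of_mul_self_eq_one ha, Complex.cosh_mul_I, Complex.sinh_mul_I, hcast,
    ← Complex.ofReal_cos, ← Complex.ofReal_sin, Real.cos_pi_div_two, Real.sin_pi_div_two]
  simp

section PhasedPermutation

variable (ι : Type*) [Fintype ι] [DecidableEq ι]

def phasedPermutationMatrices : Submonoid (Matrix ι ι ℂ) where
  carrier := {U | ∃ (σ : Equiv.Perm ι) (φ : ι → ℂ), (∀ b, ‖φ b‖ = 1) ∧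
    ∀ b, U *ᵥ Pi.single b 1 = φ b • Pi.single (σ b) 1}
  one_mem' := ⟨1, fun _ => 1, fun _ => norm_one, fun b => by rw [one_mulVec, one_smul]; rfl⟩
  mul_mem' := by
    rintro U V ⟨σ, φ, hφ, hU⟩ ⟨τ, ψ, hψ, hV⟩
    refine ⟨τ.trans σ, fun b => φ (τ b) * ψ b, fun b => by simp [hφ, hψ], fun b => ?_⟩
    rw [← mulVec_mulVec, hV, mulVec_smul, hU, smul_smul, mul_comm]
    rfl

variable {ι}

theorem mem_phasedPermutationMatrices_iff {U : Matrix ι ι ℂ} :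
    U ∈ phasedPermutationMatrices ι ↔ ∃ (σ : Equiv.Perm ι) (φ : ι → ℂ), (∀ b, ‖φ b‖ = 1) ∧
      ∀ a b, U a b = if a = σ b then φ b else 0 := by
  refine exists₂_congr fun σ φ => and_congr_right fun _ => ?_
  rw [forall_comm]
  refine forall_congr' fun b => ?_
  rw [mulVec_single_one, funext_iff]
  refine forall_congr' fun a => ?_
  simp [Pi.single_apply]

theorem smul_mem_phasedPermutationMatrices {U : Matrix ι ι ℂ}
    (hU : U ∈ phasedPermutationMatrices ι) {c : ℂ} (hc : ‖c‖ = 1) :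
    c • U ∈ phasedPermutationMatrices ι := by
  obtain ⟨σ, φ, hφ, hU⟩ := hU
  exact ⟨σ, fun b => c * φ b, fun b => by simp [hc, hφ], fun b => by
    rw [smul_mulVec, hU, smul_smul]⟩

end PhasedPermutation

theorem basisVec_eq_single (n : ℕ) (b : Fin n → Fin 2) : basisVec n b = Pi.single b 1 := by
  funext a
  simp [basisVec, Pi.single_apply]

theorem pauliWord_mem_phasedPermutationMatrices {n : ℕ} {p : Fin n → Matrix (Fin 2) (Fin 2) ℂ}
    (hp : ∀ i, p i ∈ phasedPermutationMatrices (Fin 2)) :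
    PauliWord n p ∈ phasedPermutationMatrices (Fin n → Fin 2) := by
  simp only [mem_phasedPermutationMatrices_iff] at hp ⊢
  choose σ φ hφ hp using hp
  refine ⟨Equiv.piCongrRight σ, fun b => ∏ i, φ i (b i), fun b => by simp [hφ], fun a b => ?_⟩
  simp only [PauliWord, of_apply, hp, Finset.prod_ite_zero, Finset.mem_univ,
    forall_const, funext_iff, Equiv.piCongrRight_apply, Pi.map_apply]

theorem pauliWord_mul (n : ℕ) (p q : Fin n → Matrix (Fin 2) (Fin 2) ℂ) :
    PauliWord n p * PauliWord n q = PauliWord n (p * q) := by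
  ext a c
  simp only [PauliWord, mul_apply, of_apply, Pi.mul_apply, ← Finset.prod_mul_distrib]
  rw [Finset.prod_univ_sum, Fintype.piFinset_univ]

theorem pauliWord_one (n : ℕ) : PauliWord n 1 = 1 := by
  ext a b
  simp only [PauliWord, of_apply, Pi.one_apply, one_apply, Finset.prod_boole, funext_iff]
  simp

theorem pauliI_eq_one : PauliI = 1 := by
  ext i k; fin_cases i <;> fin_cases k <;> rfl

theorem pauliY_mul_self : PauliY * PauliY = 1 := by
  rw [PauliY, mul_fin_two, one_fin_two]; norm_num

theorem pauliZ_mul_self : PauliZ * PauliZ = 1 := by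
  rw [PauliZ, mul_fin_two, one_fin_two]; norm_num

theorem pauliY_mem_phasedPermutationMatrices : PauliY ∈ phasedPermutationMatrices (Fin 2) :=
  mem_phasedPermutationMatrices_iff.2 ⟨Equiv.swap 0 1, ![I, -I], by simp [Fin.forall_fin_two],
    by simp [Fin.forall_fin_two, PauliY]⟩

theorem pauliZ_mem_phasedPermutationMatrices : PauliZ ∈ phasedPermutationMatrices (Fin 2) :=
  mem_phasedPermutationMatrices_iff.2 ⟨1, ![1, -1], by simp [Fin.forall_fin_two],
    by simp [Fin.forall_fin_two, PauliZ]⟩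

theorem stabRot_mul_self (n : ℕ) (A : Finset (Fin n)) (j : Fin n) :
    stabRot n A j * stabRot n A j = 1 := by
  rw [stabRot, pauliWord_mul, ← pauliWord_one n]
  congr 1
  funext i
  simp only [Pi.mul_apply, Pi.one_apply]
  split_ifs <;> simp [pauliY_mul_self, pauliZ_mul_self, pauliI_eq_one]

theorem stabRot_mem_phasedPermutationMatrices (n : ℕ) (A : Finset (Fin n)) (j : Fin n) :
    stabRot n A j ∈ phasedPermutationMatrices (Fin n → Fin 2) := by
  refine pauliWord_mem_phasedPermutationMatrices fun i => ?_
  split_ifs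
  · exact pauliY_mem_phasedPermutationMatrices
  · exact pauliZ_mem_phasedPermutationMatrices
  · exact pauliI_eq_one ▸ one_mem _

theorem product_of_stabilizer_rotations_permutes_basis_up_to_phase_general
    (n : ℕ) (m : ℕ)
    (A : Fin m → Finset (Fin n)) (j : Fin m → Fin n) :
    ∃ (σ : Equiv.Perm (Fin n → Fin 2)) (φ : (Fin n → Fin 2) → ℂ),
      (∀ b, ‖φ b‖ = 1) ∧
      ∀ b : Fin n → Fin 2,
        (((List.finRange m).map fun k =>
            NormedSpace.exp (((Real.pi / 2 : ℂ) * Complex.I) • stabRot n (A k) (j k))).prod).mulVec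
          (basisVec n b) = φ b • basisVec n (σ b) := by
  have hU : ((List.finRange m).map fun k =>
      NormedSpace.exp (((Real.pi / 2 : ℂ) * Complex.I) • stabRot n (A k) (j k))).prod ∈
      phasedPermutationMatrices (Fin n → Fin 2) := by
    refine Submonoid.list_prod_mem _ fun U hU => ?_
    obtain ⟨k, -, rfl⟩ := List.mem_map.1 hU
    rw [exp_pi_div_two_mul_I_smul_of_mul_self_eq_one (stabRot_mul_self n (A k) (j k))]
    exact smul_mem_phasedPermutationMatrices (stabRot_mem_phasedPermutationMatrices n (A k) (j k))
      norm_I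
  obtain ⟨σ, φ, hφ, hcol⟩ := hU
  exact ⟨σ, φ, hφ, fun b => by simpa only [basisVec_eq_single] using hcol b⟩

/-- A product of `π/2` rotations generated by stabilizer-rotation Pauli words
maps computational basis states bijectively to computational basis states, up to phases. -/
theorem product_of_stabilizer_rotations_permutes_basis_up_to_phase
    (n : ℕ) (hn : 1 ≤ n) (m : ℕ)
    (A : Fin m → Finset (Fin n)) (j : Fin m → Fin n) (hAj : ∀ k, j k ∉ A k) :
    ∃ (σ : Equiv.Perm (Fin n → Fin 2)) (φ : (Fin n → Fin 2) → ℂ),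
      (∀ b, ‖φ b‖ = 1) ∧
      ∀ b : Fin n → Fin 2,
        (((List.finRange m).map fun k =>
            NormedSpace.exp (((Real.pi / 2 : ℂ) * Complex.I) • stabRot n (A k) (j k))).prod).mulVec
          (basisVec n b) = φ b • basisVec n (σ b) :=
  product_of_stabilizer_rotations_permutes_basis_up_to_phase_general n m A j
end

section
/- Let H be a Hermitian d×d complex matrix, let E₀ be its smallest eigenvalue with unit eigenvector ψ₀ spanning the (one-dimensional) E₀-eigenspace, and let ψ_I ∈ ℂ^d satisfy ⟨ψ₀, ψ_I⟩ ≠ 0. Then the imaginary-time energy estimator converges to the ground-state energy: lim_{t→∞} ⟨ψ_I, H exp(−2tH) ψ_I⟩ / ⟨ψ_I, exp(−2tH) ψ_I⟩ = E₀, where the denominator is a strictly positive real number for every t. -/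
/-!
Diagonalising `H = U diag(λ) U*` turns both the numerator and the denominator into sums
`∑ᵢ f(λᵢ) e^{-2tλᵢ} |(U* ψ_I)ᵢ|²`. After factoring out `e^{-2tE₀}`, every term with `λᵢ > E₀`
decays, so the quotient tends to `E₀` provided the surviving weight, carried by the
`E₀`-eigenvectors, is nonzero. It is, because `ψ₀` lies in the `E₀`-eigenspace and
`⟨ψ₀, ψ_I⟩ = ⟨U* ψ₀, U* ψ_I⟩ ≠ 0`.
-/

open Matrix

section Asymptotics

open Filter Topology Real

theorem tendsto_exp_neg_mul_atTop_of_nonneg {c : ℝ} (hc : 0 ≤ c) :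
    Tendsto (fun s => exp (-s * c)) atTop (𝓝 (if c = 0 then 1 else 0)) := by
  split_ifs with h
  · simp [h]
  · have hc' : 0 < c := lt_of_le_of_ne hc (Ne.symm h)
    refine (tendsto_exp_neg_atTop_nhds_zero.comp (tendsto_id.atTop_mul_const hc')).congr
      fun s => ?_
    simp [neg_mul]

theorem tendsto_sum_mul_exp_div_sum_exp_atTop {ι : Type*} [Fintype ι] {lam w : ι → ℝ} {E₀ : ℝ}
    (hmin : ∀ i, E₀ ≤ lam i) (hW : ∑ i with lam i = E₀, w i ≠ 0) :
    Tendsto (fun s => (∑ i, lam i * exp (-s * lam i) * w i) / ∑ i, exp (-s * lam i) * w i)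
      atTop (𝓝 E₀) := by
  have hshift (f : ι → ℝ) (s : ℝ) : ∑ i, f i * exp (-s * lam i) * w i =
      exp (-s * E₀) * ∑ i, f i * exp (-s * (lam i - E₀)) * w i := by
    rw [Finset.mul_sum]
    refine Finset.sum_congr rfl fun i _ => ?_
    rw [show -s * lam i = -s * E₀ + -s * (lam i - E₀) by ring, exp_add]
    ring
  have hlim (f : ι → ℝ) : Tendsto (fun s => ∑ i, f i * exp (-s * (lam i - E₀)) * w i) atTop
      (𝓝 (∑ i with lam i = E₀, f i * w i)) := by
    rw [Finset.sum_filter]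
    refine tendsto_finsetSum _ fun i _ => ?_
    convert ((tendsto_exp_neg_mul_atTop_of_nonneg (sub_nonneg.2 (hmin i))).const_mul (f i)).mul_const
      (w i) using 2
    simp [sub_eq_zero]
  have hnum : ∑ i with lam i = E₀, lam i * w i = E₀ * ∑ i with lam i = E₀, w i := by
    rw [Finset.mul_sum]
    exact Finset.sum_congr rfl fun i hi => by rw [(Finset.mem_filter.1 hi).2]
  have h := (hlim lam).div (hlim 1) (by simpa using hW)
  simp only [Pi.one_apply, one_mul, hnum, mul_div_cancel_right₀ _ hW] at h
  refine h.congr fun s => ?_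
  have hden := hshift 1 s
  simp only [Pi.one_apply, one_mul] at hden
  rw [Pi.div_apply, hshift lam s, hden, mul_div_mul_left _ _ (exp_ne_zero _)]

end Asymptotics

namespace Matrix

variable {𝕜 n : Type*} [RCLike 𝕜] [Fintype n]

theorem star_dotProduct_mulVec_eq (U : Matrix n n 𝕜) (x y : n → 𝕜) :
    star x ⬝ᵥ U *ᵥ y = star (star U *ᵥ x) ⬝ᵥ y := by
  rw [star_mulVec, star_eq_conjTranspose, conjTranspose_conjTranspose, dotProduct_mulVec]

variable [DecidableEq n]

theorem star_dotProduct_conj_diagonal_mulVec (U : unitary (Matrix n n 𝕜)) (f : n → ℝ)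
    (x : n → 𝕜) :
    star x ⬝ᵥ (Unitary.conjStarAlgAut 𝕜 _ U (diagonal fun i => (f i : 𝕜))) *ᵥ x =
      ((∑ i, f i * ‖(star (U : Matrix n n 𝕜) *ᵥ x) i‖ ^ 2 : ℝ) : 𝕜) := by
  rw [Unitary.conjStarAlgAut_apply, ← mulVec_mulVec, ← mulVec_mulVec, star_dotProduct_mulVec_eq]
  simp only [dotProduct, mulVec_diagonal, Pi.star_apply, RCLike.star_def]
  push_cast
  refine Finset.sum_congr rfl fun i _ => ?_
  rw [← RCLike.conj_mul]
  ring

theorem exp_conjStarAlgAut (U : unitary (Matrix n n 𝕜)) (A : Matrix n n 𝕜) :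
    NormedSpace.exp (Unitary.conjStarAlgAut 𝕜 _ U A) =
      Unitary.conjStarAlgAut 𝕜 _ U (NormedSpace.exp A) := by
  simpa [Unitary.conjStarAlgAut_apply, Unitary.star_eq_inv] using
    exp_units_conj (Unitary.toUnits U) A

theorem apply_eq_of_conjStarAlgAut_diagonal_mulVec_eq_smul (U : unitary (Matrix n n 𝕜))
    {d : n → 𝕜} {μ : 𝕜} {v : n → 𝕜}
    (hv : Unitary.conjStarAlgAut 𝕜 _ U (diagonal d) *ᵥ v = μ • v) {i : n}
    (hi : (star (U : Matrix n n 𝕜) *ᵥ v) i ≠ 0) : d i = μ := by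
  have h := congrFun (congrArg (star (U : Matrix n n 𝕜) *ᵥ ·) hv) i
  simp only [Unitary.conjStarAlgAut_apply, mulVec_mulVec, ← Matrix.mul_assoc,
    Unitary.coe_star_mul_self, Matrix.one_mul, mulVec_smul] at h
  rw [← mulVec_mulVec, mulVec_diagonal, Pi.smul_apply, smul_eq_mul] at h
  exact mul_right_cancel₀ hi h

namespace IsHermitian

variable {H : Matrix n n 𝕜} (hH : H.IsHermitian)
include hH

theorem exp_real_smul (s : ℝ) :
    NormedSpace.exp ((s : 𝕜) • H) = Unitary.conjStarAlgAut 𝕜 _ hH.eigenvectorUnitary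
      (diagonal fun i => (Real.exp (s * hH.eigenvalues i) : 𝕜)) := by
  conv_lhs => rw [hH.spectral_theorem]
  rw [← map_smul, ← diagonal_smul, exp_conjStarAlgAut, exp_diagonal]
  congr 2
  ext i
  simp [Real.exp_eq_exp_ℝ, ← RCLike.algebraMap_eq_ofReal, NormedSpace.algebraMap_exp_comm]

theorem mul_exp_real_smul (s : ℝ) :
    H * NormedSpace.exp ((s : 𝕜) • H) = Unitary.conjStarAlgAut 𝕜 _ hH.eigenvectorUnitary
      (diagonal fun i => ((hH.eigenvalues i * Real.exp (s * hH.eigenvalues i) : ℝ) : 𝕜)) := by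
  conv_lhs => enter [1]; rw [hH.spectral_theorem]
  rw [hH.exp_real_smul s, ← map_mul, diagonal_mul_diagonal]
  simp

theorem eigenvalues_eq_of_mulVec_eq_smul {μ : ℝ} {v : n → 𝕜} (hv : H *ᵥ v = (μ : 𝕜) • v)
    {i : n} (hi : (star (hH.eigenvectorUnitary : Matrix n n 𝕜) *ᵥ v) i ≠ 0) :
    hH.eigenvalues i = μ := by
  rw [hH.spectral_theorem] at hv
  simpa using apply_eq_of_conjStarAlgAut_diagonal_mulVec_eq_smul _ hv hi

theorem le_eigenvalues {E₀ : ℝ}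
    (hmin : ∀ (μ : ℝ) (v : n → 𝕜), v ≠ 0 → H *ᵥ v = (μ : 𝕜) • v → E₀ ≤ μ) (i : n) :
    E₀ ≤ hH.eigenvalues i :=
  hmin _ _ (fun h => hH.eigenvectorBasis.orthonormal.ne_zero i (by ext j; exact congrFun h j))
    (by rw [hH.mulVec_eigenvectorBasis, RCLike.real_smul_eq_coe_smul (K := 𝕜)])

theorem exists_eigenvalues_eq_and_apply_ne_zero {μ : ℝ} {v x : n → 𝕜}
    (hv : H *ᵥ v = (μ : 𝕜) • v) (hvx : star v ⬝ᵥ x ≠ 0) :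
    ∃ i, hH.eigenvalues i = μ ∧ (star (hH.eigenvectorUnitary : Matrix n n 𝕜) *ᵥ x) i ≠ 0 := by
  have hx : x = (hH.eigenvectorUnitary : Matrix n n 𝕜) *ᵥ
      (star (hH.eigenvectorUnitary : Matrix n n 𝕜) *ᵥ x) := by
    rw [mulVec_mulVec, Unitary.mul_star_self_of_mem hH.eigenvectorUnitary.2, one_mulVec]
  rw [hx, star_dotProduct_mulVec_eq] at hvx
  obtain ⟨i, -, hi⟩ := Finset.exists_ne_zero_of_sum_ne_zero hvx
  exact ⟨i, hH.eigenvalues_eq_of_mulVec_eq_smul hv (star_ne_zero.1 (left_ne_zero_of_mul hi)),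
    right_ne_zero_of_mul hi⟩

end IsHermitian

end Matrix

theorem imaginary_time_energy_estimator_tendsto_ground_energy_general
    (d : ℕ) (H : Matrix (Fin d) (Fin d) ℂ) (hH : H.IsHermitian)
    (E₀ : ℝ) (ψ₀ ψI : Fin d → ℂ)
    (hEig : H.mulVec ψ₀ = (E₀ : ℂ) • ψ₀)
    (hMin : ∀ (μ : ℝ) (v : Fin d → ℂ), v ≠ 0 → H.mulVec v = (μ : ℂ) • v → E₀ ≤ μ)
    (hOv : star ψ₀ ⬝ᵥ ψI ≠ 0) :
    Filter.Tendsto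
      (fun t : ℝ =>
        (star ψI ⬝ᵥ (H * NormedSpace.exp ((-(2 * t) : ℂ) • H)).mulVec ψI) /
          (star ψI ⬝ᵥ (NormedSpace.exp ((-(2 * t) : ℂ) • H)).mulVec ψI))
      Filter.atTop (nhds (E₀ : ℂ)) ∧
    ∀ t : ℝ,
      0 < (star ψI ⬝ᵥ (NormedSpace.exp ((-(2 * t) : ℂ) • H)).mulVec ψI).re ∧
        (star ψI ⬝ᵥ (NormedSpace.exp ((-(2 * t) : ℂ) • H)).mulVec ψI).im = 0 := by
  set w : Fin d → ℝ := fun i =>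
    ‖(star (hH.eigenvectorUnitary : Matrix (Fin d) (Fin d) ℂ) *ᵥ ψI) i‖ ^ 2
  -- `RCLike.ofReal` on `ℂ` unfolds to `Complex.ofReal`; the `rfl`s below rely on this.
  have hcast (t : ℝ) : (-(2 * t) : ℂ) = RCLike.ofReal (-(2 * t)) := by push_cast; rfl
  have hden (t : ℝ) : star ψI ⬝ᵥ (NormedSpace.exp ((-(2 * t) : ℂ) • H)).mulVec ψI =
      ((∑ i, Real.exp (-(2 * t) * hH.eigenvalues i) * w i : ℝ) : ℂ) := by
    rw [hcast, hH.exp_real_smul, star_dotProduct_conj_diagonal_mulVec]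
    rfl
  have hnum (t : ℝ) : star ψI ⬝ᵥ (H * NormedSpace.exp ((-(2 * t) : ℂ) • H)).mulVec ψI =
      ((∑ i, hH.eigenvalues i * Real.exp (-(2 * t) * hH.eigenvalues i) * w i : ℝ) : ℂ) := by
    rw [hcast, hH.mul_exp_real_smul, star_dotProduct_conj_diagonal_mulVec]
    rfl
  obtain ⟨i₀, hi₀, hbi₀⟩ := hH.exists_eigenvalues_eq_and_apply_ne_zero hEig hOv
  have hwi₀ : 0 < w i₀ := by positivity
  have hW : 0 < ∑ i with hH.eigenvalues i = E₀, w i :=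
    Finset.sum_pos' (fun i _ => by positivity) ⟨i₀, by simpa using hi₀, hwi₀⟩
  refine ⟨?_, fun t => ?_⟩
  · simp only [hnum, hden, ← Complex.ofReal_div]
    exact (Complex.continuous_ofReal.tendsto E₀).comp
      ((tendsto_sum_mul_exp_div_sum_exp_atTop (hH.le_eigenvalues hMin) hW.ne').comp
        (Filter.tendsto_id.const_mul_atTop two_pos))
  · rw [hden, Complex.ofReal_re, Complex.ofReal_im]
    exact ⟨Finset.sum_pos' (fun i _ => by positivity)
      ⟨i₀, Finset.mem_univ _, mul_pos (Real.exp_pos _) hwi₀⟩, rfl⟩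

/-- The imaginary-time energy estimator
`⟨ψ_I, H e^{-2tH} ψ_I⟩ / ⟨ψ_I, e^{-2tH} ψ_I⟩` converges to the ground-state energy `E₀`,
and the denominator is a strictly positive real number for every `t`. -/
theorem imaginary_time_energy_estimator_tendsto_ground_energy
    (d : ℕ) (H : Matrix (Fin d) (Fin d) ℂ) (hH : H.IsHermitian)
    (E₀ : ℝ) (ψ₀ ψI : Fin d → ℂ)
    (hEig : H.mulVec ψ₀ = (E₀ : ℂ) • ψ₀)
    (hUnit : star ψ₀ ⬝ᵥ ψ₀ = 1)
    (hMin : ∀ (μ : ℝ) (v : Fin d → ℂ), v ≠ 0 → H.mulVec v = (μ : ℂ) • v → E₀ ≤ μ)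
    (hSimple : ∀ v : Fin d → ℂ, H.mulVec v = (E₀ : ℂ) • v → ∃ c : ℂ, v = c • ψ₀)
    (hOv : star ψ₀ ⬝ᵥ ψI ≠ 0) :
    Filter.Tendsto
      (fun t : ℝ =>
        (star ψI ⬝ᵥ (H * NormedSpace.exp ((-(2 * t) : ℂ) • H)).mulVec ψI) /
          (star ψI ⬝ᵥ (NormedSpace.exp ((-(2 * t) : ℂ) • H)).mulVec ψI))
      Filter.atTop (nhds (E₀ : ℂ)) ∧
    ∀ t : ℝ,
      0 < (star ψI ⬝ᵥ (NormedSpace.exp ((-(2 * t) : ℂ) • H)).mulVec ψI).re ∧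
        (star ψI ⬝ᵥ (NormedSpace.exp ((-(2 * t) : ℂ) • H)).mulVec ψI).im = 0 :=
  imaginary_time_energy_estimator_tendsto_ground_energy_general d H hH E₀ ψ₀ ψI hEig hMin hOv
end

section
/- Let v be a Hermitian d×d complex matrix and let λ ≥ 0 be a real number. Then the Hubbard–Stratonovich identity holds: ∫_ℝ (2π)^{−1/2} e^{−x²/2} · exp(i√λ · x · v) dx = exp(−(λ/2) · v²), where exp denotes the matrix exponential, v² the matrix square, and the integral is the Bochner integral of a matrix-valued function of the real variable x (which is integrable, since exp(i√λ x v) is unitary for every real x). -/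
open Matrix

attribute [local instance] Matrix.normedAddCommGroup Matrix.normedSpace

/-!
By the spectral theorem a Hermitian matrix `A` is the image of a real vector `t` under the
algebra homomorphism `w ↦ U * diagonal w * star U`. A continuous algebra homomorphism commutes
with `exp` and with the Bochner integral, so the identity for `A` reduces to the same identity in
the commutative algebra `n → ℂ`, i.e. to the characteristic function `exp (-s ^ 2 / 2)` of the
standard Gaussian, taken at each eigenvalue `s`. Rescaling `v` by `√λ` gives the general case.
-/

open MeasureTheory ProbabilityTheory Complex

lemma integral_gaussianReal_zero_one_eq_integral_smul {E : Type*} [NormedAddCommGroup E]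
    [NormedSpace ℝ E] (f : ℝ → E) :
    ∫ x, f x ∂gaussianReal 0 1 =
      ∫ x, ((2 * Real.pi) ^ (-(1 : ℝ) / 2) * Real.exp (-x ^ 2 / 2)) • f x := by
  rw [integral_gaussianReal_eq_integral_smul one_ne_zero]
  congr with x
  rw [gaussianPDFReal_def, Real.sqrt_eq_rpow, ← Real.rpow_neg (by positivity)]
  simp [neg_div]

theorem AlgHom.map_exp_of_finiteDimensional {𝕜 A m : Type*} [RCLike 𝕜] [NormedRing A]
    [NormedAlgebra 𝕜 A] [FiniteDimensional 𝕜 A] [Fintype m] [DecidableEq m]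
    (Φ : A →ₐ[𝕜] Matrix m m 𝕜) (a : A) :
    Φ (NormedSpace.exp a) = NormedSpace.exp (Φ a) := by
  -- `NormedSpace.map_exp` needs a normed ring; the operator norm induces the product topology.
  let : NormedRing (Matrix m m 𝕜) := Matrix.linftyOpNormedRing
  let : NormedAlgebra 𝕜 (Matrix m m 𝕜) := Matrix.linftyOpNormedAlgebra
  have : CompleteSpace A := FiniteDimensional.complete 𝕜 A
  let : NormedAlgebra ℚ A := NormedAlgebra.restrictScalars ℚ 𝕜 A
  exact NormedSpace.map_exp Φ Φ.toLinearMap.continuous_of_finiteDimensional a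

section Pi

variable {n : Type*} [Fintype n] (t : n → ℝ)

lemma exp_mul_I_smul_ofReal_apply (x : ℝ) (j : n) :
    NormedSpace.exp (((x : ℂ) * I) • fun j => (t j : ℂ)) j = cexp (t j * x * I) := by
  rw [Pi.coe_exp, ← Complex.exp_eq_exp_ℂ, Pi.smul_apply, smul_eq_mul]
  congr 1
  ring

lemma integrable_exp_mul_I_smul_ofReal (μ : Measure ℝ) [IsFiniteMeasure μ] :
    Integrable (fun x : ℝ => NormedSpace.exp (((x : ℂ) * I) • fun j => (t j : ℂ))) μ := by
  refine integrable_pi_iff.2 fun j => ?_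
  simp only [exp_mul_I_smul_ofReal_apply]
  exact Integrable.of_bound (by fun_prop) 1 (ae_of_all _ fun x => by
    rw [← ofReal_mul, norm_exp_ofReal_mul_I])

lemma integral_exp_mul_I_smul_ofReal_gaussianReal :
    ∫ x : ℝ, NormedSpace.exp (((x : ℂ) * I) • fun j => (t j : ℂ)) ∂gaussianReal 0 1 =
      NormedSpace.exp ((-(1 / 2) : ℂ) • ((fun j => (t j : ℂ)) * fun j => (t j : ℂ))) := by
  funext j
  rw [eval_integral (integrable_pi_iff.1 (integrable_exp_mul_I_smul_ofReal t _)), Pi.coe_exp,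
    ← Complex.exp_eq_exp_ℂ]
  simp only [exp_mul_I_smul_ofReal_apply, ← charFun_apply_real, charFun_gaussianReal]
  congr 1
  simp only [Pi.smul_apply, Pi.mul_apply, smul_eq_mul]
  push_cast
  ring

end Pi

theorem Matrix.IsHermitian.integral_exp_mul_I_smul_gaussianReal {n : Type*} [Fintype n]
    [DecidableEq n] {A : Matrix n n ℂ} (hA : A.IsHermitian) :
    ∫ x : ℝ, NormedSpace.exp (((x : ℂ) * I) • A) ∂gaussianReal 0 1 =
      NormedSpace.exp ((-(1 / 2) : ℂ) • (A * A)) := by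
  let Φ : (n → ℂ) →ₐ[ℂ] Matrix n n ℂ :=
    (Unitary.conjStarAlgAut ℂ _ hA.eigenvectorUnitary : _ →ₐ[ℂ] _).comp (diagonalAlgHom ℂ)
  have hA_eq : A = Φ fun j => (hA.eigenvalues j : ℂ) := hA.spectral_theorem
  rw [hA_eq]
  simp_rw [← map_mul, ← map_smul, ← Φ.map_exp_of_finiteDimensional]
  exact (Φ.toLinearMap.toContinuousLinearMap.integral_comp_comm
    (integrable_exp_mul_I_smul_ofReal _ _)).trans
    (congrArg Φ (integral_exp_mul_I_smul_ofReal_gaussianReal _))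

/-- The Hubbard–Stratonovich identity: for a Hermitian matrix `v` and `λ ≥ 0`,
`∫ (2π)^{-1/2} e^{-x²/2} exp(i√λ x v) dx = exp(-(λ/2) v²)`. -/
theorem hubbard_stratonovich
    (d : ℕ) (v : Matrix (Fin d) (Fin d) ℂ) (hv : v.IsHermitian)
    (lam : ℝ) (hlam : 0 ≤ lam) :
    ∫ x : ℝ, ((2 * Real.pi) ^ (-(1 : ℝ) / 2) * Real.exp (-x ^ 2 / 2)) •
        NormedSpace.exp ((Complex.I * (Real.sqrt lam : ℂ) * (x : ℂ)) • v) =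
      NormedSpace.exp ((-(lam / 2) : ℂ) • (v * v)) := by
  have hA : ((√lam : ℂ) • v).IsHermitian := hv.smul (conj_ofReal _)
  have hlhs (x : ℝ) : (I * √lam * x) • v = ((x : ℂ) * I) • ((√lam : ℂ) • v) := by
    rw [smul_smul]
    congr 1
    ring
  have hrhs : (-(lam / 2) : ℂ) • (v * v) =
      (-(1 / 2) : ℂ) • ((√lam : ℂ) • v * ((√lam : ℂ) • v)) := by
    rw [smul_mul_smul_comm, smul_smul, ← ofReal_mul, Real.mul_self_sqrt hlam]
    congr 1
    ring
  rw [← integral_gaussianReal_zero_one_eq_integral_smul]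
  simp_rw [hlhs, hrhs]
  exact hA.integral_exp_mul_I_smul_gaussianReal
end
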